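/- The functions I₀ = u, I₁ = x u_x + y u_y, I_{2a} = x²u_{xx} + 2xy u_{xy} + y²u_{yy}, I_{2b} = x u_y u_{xx} − y u_x u_{yy} + (y u_y − x u_x)u_{xy}, and I_{2c} = u_x²u_{yy} − 2u_x u_y u_{xy} + u_y²u_{xx} are functionally independent on J²ℝ²: their differentials are linearly independent at some (equivalently generic) point of the 8-dimensional jet space with coordinates (x,y,u,u_x,u_y,u_{xx},u_{xy},u_{yy}). -/

import Mathlib

open Matrix

noncomputable section

/-- Coordinates on `J²ℝ²`: `(x, y, u, u_x, u_y, u_xx, u_xy, u_yy)`. -/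
def I0 : (Fin 8 → ℝ) → ℝ := fun p => p 2

def I1 : (Fin 8 → ℝ) → ℝ := fun p => p 0 * p 3 + p 1 * p 4

def I2a : (Fin 8 → ℝ) → ℝ := fun p =>
  (p 0) ^ 2 * p 5 + 2 * p 0 * p 1 * p 6 + (p 1) ^ 2 * p 7

def I2b : (Fin 8 → ℝ) → ℝ := fun p =>
  p 0 * p 4 * p 5 - p 1 * p 3 * p 7 + (p 1 * p 4 - p 0 * p 3) * p 6

def I2c : (Fin 8 → ℝ) → ℝ := fun p =>
  (p 3) ^ 2 * p 7 - 2 * p 3 * p 4 * p 6 + (p 4) ^ 2 * p 5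

/-
At the jet `x = u_x = u_xy = 1` (all other coordinates `0`) the differentials of the five
invariants are `du`, `dx + du_x`, `2 dy + du_xx`, `-(dx + du_x + du_xy)` and `du_yy - 2 du_y`.
Evaluating them on the tangent vectors `∂_u`, `∂_{u_x} - ∂_{u_xy}`, `∂_{u_xx}`, `-∂_{u_xy}`,
`∂_{u_yy}` gives the identity matrix, so they are linearly independent.
-/

local notation "d[" i "]" => ContinuousLinearMap.proj (R := ℝ) (φ := fun _ : Fin 8 => ℝ) i

theorem hasFDerivAt_I0 (p : Fin 8 → ℝ) : HasFDerivAt I0 d[2] p :=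
  hasFDerivAt_apply 2 p

theorem hasFDerivAt_I1 (p : Fin 8 → ℝ) :
    HasFDerivAt I1 (p 3 • d[0] + p 4 • d[1] + p 0 • d[3] + p 1 • d[4]) p := by
  have e := fun i : Fin 8 => hasFDerivAt_apply (𝕜 := ℝ) i p
  refine (((e 0).mul (e 3)).add ((e 1).mul (e 4))).congr_fderiv ?_
  ext v; simp; ring

theorem hasFDerivAt_I2a (p : Fin 8 → ℝ) :
    HasFDerivAt I2a
      ((2 * (p 0 * p 5 + p 1 * p 6)) • d[0] + (2 * (p 0 * p 6 + p 1 * p 7)) • d[1]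
        + (p 0 ^ 2) • d[5] + (2 * p 0 * p 1) • d[6] + (p 1 ^ 2) • d[7]) p := by
  have e := fun i : Fin 8 => hasFDerivAt_apply (𝕜 := ℝ) i p
  refine (((((e 0).pow 2).mul (e 5)).add ((((e 0).const_mul 2).mul (e 1)).mul (e 6))).add
    (((e 1).pow 2).mul (e 7))).congr_fderiv ?_
  ext v; simp; ring

theorem hasFDerivAt_I2b (p : Fin 8 → ℝ) :
    HasFDerivAt I2b
      ((p 4 * p 5 - p 3 * p 6) • d[0] + (p 4 * p 6 - p 3 * p 7) • d[1]
        - (p 0 * p 6 + p 1 * p 7) • d[3] + (p 0 * p 5 + p 1 * p 6) • d[4]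
        + (p 0 * p 4) • d[5] + (p 1 * p 4 - p 0 * p 3) • d[6] - (p 1 * p 3) • d[7]) p := by
  have e := fun i : Fin 8 => hasFDerivAt_apply (𝕜 := ℝ) i p
  refine (((((e 0).mul (e 4)).mul (e 5)).sub (((e 1).mul (e 3)).mul (e 7))).add
    ((((e 1).mul (e 4)).sub ((e 0).mul (e 3))).mul (e 6))).congr_fderiv ?_
  ext v; simp; ring

theorem hasFDerivAt_I2c (p : Fin 8 → ℝ) :
    HasFDerivAt I2c
      ((2 * (p 3 * p 7 - p 4 * p 6)) • d[3] + (2 * (p 4 * p 5 - p 3 * p 6)) • d[4]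
        + (p 4 ^ 2) • d[5] - (2 * p 3 * p 4) • d[6] + (p 3 ^ 2) • d[7]) p := by
  have e := fun i : Fin 8 => hasFDerivAt_apply (𝕜 := ℝ) i p
  refine (((((e 3).pow 2).mul (e 7)).sub ((((e 3).const_mul 2).mul (e 4)).mul (e 6))).add
    (((e 4).pow 2).mul (e 5))).congr_fderiv ?_
  ext v; simp; ring

def basePoint : Fin 8 → ℝ := ![1, 0, 0, 1, 0, 0, 1, 0]

theorem fderiv_invariants_basePoint :
    ![fderiv ℝ I0 basePoint, fderiv ℝ I1 basePoint, fderiv ℝ I2a basePoint,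
        fderiv ℝ I2b basePoint, fderiv ℝ I2c basePoint] =
      ![d[2], d[0] + d[3], (2 : ℝ) • d[1] + d[5], -(d[0] + d[3] + d[6]), d[7] - (2 : ℝ) • d[4]] := by
  rw [(hasFDerivAt_I0 _).fderiv, (hasFDerivAt_I1 _).fderiv, (hasFDerivAt_I2a _).fderiv,
    (hasFDerivAt_I2b _).fderiv, (hasFDerivAt_I2c _).fderiv]
  ext k v
  fin_cases k <;> simp [basePoint] <;> ring

theorem linearIndependent_basePoint_forms :
    LinearIndependent ℝ
      ![d[2], d[0] + d[3], (2 : ℝ) • d[1] + d[5], -(d[0] + d[3] + d[6]), d[7] - (2 : ℝ) • d[4]] := by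
  let w : Fin 5 → Fin 8 → ℝ :=
    ![![0, 0, 1, 0, 0, 0, 0, 0], ![0, 0, 0, 1, 0, 0, -1, 0], ![0, 0, 0, 0, 0, 1, 0, 0],
      ![0, 0, 0, 0, 0, 0, -1, 0], ![0, 0, 0, 0, 0, 0, 0, 1]]
  refine .of_pairwise_dual_eq_zero_one _
    (fun i => (ContinuousLinearMap.apply ℝ ℝ (w i)).toLinearMap) ?_ ?_
  · intro i j hij
    fin_cases i <;> fin_cases j <;> simp [w] at hij ⊢
  · intro i
    fin_cases i <;> simp [w]

/-- Functional independence: the differentials of the five invariants are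
linearly independent at some point of the 8-dimensional jet space. -/
theorem stmt_2 : ∃ p : Fin 8 → ℝ,
    LinearIndependent ℝ
      ![fderiv ℝ I0 p, fderiv ℝ I1 p, fderiv ℝ I2a p, fderiv ℝ I2b p, fderiv ℝ I2c p] :=
  ⟨_, fderiv_invariants_basePoint ▸ linearIndependent_basePoint_forms⟩
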